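/- arXiv:1407.1190 — 4 statements merged into one kernel-verified Lean document; each statement's English description precedes it below -/
import Mathlib

section
/- Let f : ℝ → ℝ be continuous and differentiable at 0, let θ > 2, and suppose the AR condition with exponent θ holds: 0 < θ·F(u) ≤ u·f(u) for all u ≠ 0. Then f(0) = 0 and f′(0) = 0. -/
/-! The AR condition makes `F` positive away from `0`, so `F` has a minimum at `0` and
`f 0 = F' 0 = 0`. With `a = f' 0`, the quotients `f u / u` and `F u / u ^ 2` tend to `a` and
`a / 2` (the latter by L'Hôpital). Dividing `0 < θ F u ≤ u f u` by `u ^ 2` and passing to the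
limit gives `0 ≤ θ a / 2 ≤ a`, which forces `a = 0` because `θ > 2`. -/

open MeasureTheory

/-- The primitive `F(u) = ∫₀ᵘ f(s) ds`. -/
noncomputable def primitive (f : ℝ → ℝ) (u : ℝ) : ℝ := ∫ s in (0:ℝ)..u, f s

open Filter Topology

theorem tendsto_div_self_nhdsNE_of_hasDerivAt {f : ℝ → ℝ} {a : ℝ} (hf0 : f 0 = 0)
    (hf : HasDerivAt f a 0) : Tendsto (fun u => f u / u) (𝓝[≠] 0) (𝓝 a) := by
  simpa [hf0, div_eq_inv_mul] using hasDerivAt_iff_tendsto_slope_zero.mp hf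

theorem tendsto_div_sq_nhdsNE_of_hasDerivAt {F f : ℝ → ℝ} {a : ℝ}
    (hF : ∀ᶠ u in 𝓝[≠] 0, HasDerivAt F (f u) u) (hF0 : Tendsto F (𝓝[≠] 0) (𝓝 0))
    (hf0 : f 0 = 0) (hf : HasDerivAt f a 0) :
    Tendsto (fun u => F u / u ^ 2) (𝓝[≠] 0) (𝓝 (a / 2)) := by
  refine HasDerivAt.lhopital_zero_nhdsNE (g' := fun u => 2 * u) hF
    (Eventually.of_forall fun u => by simpa using hasDerivAt_pow 2 u) ?_ hF0 ?_ ?_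
  · filter_upwards [self_mem_nhdsWithin] with u hu using mul_ne_zero two_ne_zero hu
  · exact tendsto_nhdsWithin_of_tendsto_nhds (by simpa using (continuous_pow 2).tendsto (0 : ℝ))
  · simpa [div_mul_eq_div_div_swap] using
      (tendsto_div_self_nhdsNE_of_hasDerivAt hf0 hf).div_const 2

theorem hasDerivAt_primitive {f : ℝ → ℝ} (hf : Continuous f) (x : ℝ) :
    HasDerivAt (primitive f) (f x) x :=
  (hf.integral_hasStrictDerivAt 0 x).hasDerivAt

@[simp]
theorem primitive_zero (f : ℝ → ℝ) : primitive f 0 = 0 := by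
  simp [primitive]

theorem ar_implies_f0_and_deriv0 (f : ℝ → ℝ) (hf : Continuous f)
    (hdiff : DifferentiableAt ℝ f 0) (θ : ℝ) (hθ : 2 < θ)
    (hAR : ∀ u : ℝ, u ≠ 0 → 0 < θ * primitive f u ∧ θ * primitive f u ≤ u * f u) :
    f 0 = 0 ∧ deriv f 0 = 0 := by
  have hF_pos : ∀ u ≠ 0, 0 < primitive f u := fun u hu =>
    pos_of_mul_pos_right (hAR u hu).1 (by linarith)
  have hf0 : f 0 = 0 := by
    have hmin : IsLocalMin (primitive f) 0 := Eventually.of_forall fun u => by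
      rcases eq_or_ne u 0 with rfl | hu
      · rfl
      · simpa using (hF_pos u hu).le
    exact hmin.hasDerivAt_eq_zero (hasDerivAt_primitive hf 0)
  refine ⟨hf0, ?_⟩
  set a := deriv f 0
  have hslope := tendsto_div_self_nhdsNE_of_hasDerivAt hf0 hdiff.hasDerivAt
  have hquad : Tendsto (fun u => primitive f u / u ^ 2) (𝓝[≠] 0) (𝓝 (a / 2)) :=
    tendsto_div_sq_nhdsNE_of_hasDerivAt (Eventually.of_forall (hasDerivAt_primitive hf))
      (by simpa using (hasDerivAt_primitive hf 0).continuousAt.tendsto.mono_left nhdsWithin_le_nhds)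
      hf0 hdiff.hasDerivAt
  have hlower : 0 ≤ a / 2 := ge_of_tendsto hquad <| by
    filter_upwards [self_mem_nhdsWithin] with u hu using
      (div_pos (hF_pos u hu) (sq_pos_of_ne_zero hu)).le
  have hupper : θ * (a / 2) ≤ a := le_of_tendsto_of_tendsto (hquad.const_mul θ) hslope <| by
    filter_upwards [self_mem_nhdsWithin] with u hu
    calc θ * (primitive f u / u ^ 2) = θ * primitive f u / u ^ 2 := mul_div_assoc' ..
      _ ≤ u * f u / u ^ 2 := div_le_div_of_nonneg_right (hAR u hu).2 (sq_nonneg u)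
      _ = f u / u := by field_simp
  nlinarith
end

section
/- Let f : ℝ → ℝ be differentiable with f(u)/u < f′(u) for all u ≠ 0, let A ∈ ℝ, let w ≠ 0 be real, and define h(t) := (t²/2)·A − F(t·w) for t > 0, where F(u) := ∫₀ᵘ f(s) ds. If t₀ > 0 satisfies h′(t₀) = 0 (i.e. t₀·A = f(t₀·w)·w), then h″(t₀) = A − f′(t₀w)·w² < 0. -/
open MeasureTheory

theorem second_derivative_negative_at_critical_point (f : ℝ → ℝ)
    (hf : Differentiable ℝ f)
    (hc : ∀ u : ℝ, u ≠ 0 → f u / u < deriv f u)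
    (A w t₀ : ℝ) (hw : w ≠ 0) (ht₀ : 0 < t₀)
    (hcrit : t₀ * A = f (t₀ * w) * w) :
    deriv (deriv (fun t : ℝ => t ^ 2 / 2 * A - primitive f (t * w))) t₀
        = A - deriv f (t₀ * w) * w ^ 2 ∧
    A - deriv f (t₀ * w) * w ^ 2 < 0 := by
  have hcont := hf.continuous
  have hF : ∀ u : ℝ, HasDerivAt (primitive f) (f u) u := fun u =>
    (intervalIntegral.integral_hasStrictDerivAt_right
      (hcont.intervalIntegrable _ _)
      (hcont.stronglyMeasurableAtFilter _ _) hcont.continuousAt).hasDerivAt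
  have hd : deriv (fun t : ℝ => t ^ 2 / 2 * A - primitive f (t * w))
      = fun t => t * A - f (t * w) * w := by
    funext t
    have h1 : HasDerivAt (fun t : ℝ => t ^ 2 / 2 * A) (t * A) t := by
      have := ((hasDerivAt_pow 2 t).div_const 2).mul_const A
      simpa [mul_comm, mul_assoc, mul_div_assoc] using this
    have h2 : HasDerivAt (fun t : ℝ => primitive f (t * w)) (f (t * w) * w) t := by
      have : HasDerivAt (fun t : ℝ => primitive f (t * w)) (f (t * w) * (1 * w)) t := by
        have h := (hF (t * w)).comp t ((hasDerivAt_id t).mul_const w); exact h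
      simpa using this
    exact (h1.sub h2).deriv
  have h3 : HasDerivAt (fun t : ℝ => t * A - f (t * w) * w)
      (A - deriv f (t₀ * w) * w ^ 2) t₀ := by
    have ha : HasDerivAt (fun t : ℝ => t * A) A t₀ := by
      simpa using (hasDerivAt_id t₀).mul_const A
    have hb : HasDerivAt (fun t : ℝ => f (t * w) * w)
        (deriv f (t₀ * w) * w ^ 2) t₀ := by
      have : HasDerivAt (fun t : ℝ => f (t * w) * w) (deriv f (t₀ * w) * (1 * w) * w) t₀ :=
        (((hf (t₀ * w)).hasDerivAt).comp t₀
        ((hasDerivAt_id t₀).mul_const w)).mul_const w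
      convert this using 1
      ring
    exact ha.sub hb
  have heq : deriv (deriv (fun t : ℝ => t ^ 2 / 2 * A - primitive f (t * w))) t₀
      = A - deriv f (t₀ * w) * w ^ 2 := by
    rw [hd]; exact h3.deriv
  refine ⟨heq, ?_⟩
  have hu : t₀ * w ≠ 0 := mul_ne_zero (ne_of_gt ht₀) hw
  have hlt := hc (t₀ * w) hu
  have hA : A = f (t₀ * w) * w / t₀ := by
    field_simp at hcrit ⊢
    linarith [hcrit]
  have : A - deriv f (t₀ * w) * w ^ 2
      = (f (t₀ * w) / (t₀ * w) - deriv f (t₀ * w)) * w ^ 2 := by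
    rw [hA]; field_simp
  rw [this]
  have hw2 : 0 < w ^ 2 := by positivity
  nlinarith [hlt, hw2]
end

section
/- Let f : ℝ → ℝ be differentiable with f(u)/u < f′(u) for all u ≠ 0, let θ > 2, and suppose the AR condition with exponent θ holds: 0 < θ·F(u) ≤ u·f(u) for all u ≠ 0, where F(u) := ∫₀ᵘ f(s) ds. Then for every real w ≠ 0 and every A > 0 there exists a unique t > 0 such that f(t·w)·w = t·A. -/
open MeasureTheory

/-!
Along the ray `t ↦ t w` the AR inequality `θ F ≤ u f(u)` says exactly that `t ↦ F(t w) t^{-θ}`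
is nondecreasing, so `F(t w)` grows at least like `t^θ` for `t ≥ 1` and vanishes at least like
`t^θ` as `t → 0⁺`. Since `t² g(t) = t w f(t w) ≥ θ F(t w)`, the fibering map
`g(t) = f(t w) w / t` is unbounded; and since `F(t w) = ∫₀ᵗ s g(s) ds`, a positive lower bound
`g ≥ A` would force `F(t w) ≥ A t² / 2`, incompatible with `θ > 2`. Condition (c) makes `g`
strictly increasing, so the intermediate value theorem gives exactly one solution of `g(t) = A`.
-/

open Filter Set Topology

lemma StrictMonoOn.existsUnique_eq_of_lt_of_lt {α δ : Type*} [ConditionallyCompleteLinearOrder α]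
    [TopologicalSpace α] [OrderTopology α] [DenselyOrdered α] [LinearOrder δ]
    [TopologicalSpace δ] [OrderClosedTopology δ] {g : α → δ} {s : Set α} (hs : s.OrdConnected)
    (hmono : StrictMonoOn g s) (hcont : ContinuousOn g s) {a b : α} {y : δ} (ha : a ∈ s)
    (hb : b ∈ s) (hay : g a < y) (hyb : y < g b) : ∃! t, t ∈ s ∧ g t = y := by
  have hab : a ≤ b := ((hmono.lt_iff_lt ha hb).1 (hay.trans hyb)).le
  obtain ⟨t, ht, hty⟩ :=
    intermediate_value_Icc hab (hcont.mono (hs.out ha hb)) ⟨hay.le, hyb.le⟩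
  exact ⟨t, ⟨hs.out ha hb ht, hty⟩,
    fun u hu => hmono.injOn hu.1 (hs.out ha hb ht) (hu.2.trans hty.symm)⟩

lemma primitive_hasDerivAt {f : ℝ → ℝ} (hf : Continuous f) (u : ℝ) :
    HasDerivAt (primitive f) (f u) u :=
  (hf.integral_hasStrictDerivAt 0 u).hasDerivAt

lemma primitive_mul_eq_integral (f : ℝ → ℝ) (w t : ℝ) :
    primitive f (t * w) = ∫ s in (0 : ℝ)..t, f (s * w) * w := by
  have h := intervalIntegral.mul_integral_comp_mul_right (a := 0) (b := t) (f := f) (c := w)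
  rw [zero_mul] at h
  rw [intervalIntegral.integral_mul_const]
  exact h.symm.trans (mul_comm _ _)

lemma rpow_eq_rpow_sub_two_mul_sq {t : ℝ} (ht : t ≠ 0) (θ : ℝ) :
    t ^ θ = t ^ (θ - 2) * t ^ 2 := by
  simpa using Real.rpow_add_natCast ht (θ - 2) 2

section AmbrosettiRabinowitz

variable {f : ℝ → ℝ} {θ w : ℝ}

lemma monotoneOn_primitive_mul_rpow_neg (hf : Continuous f)
    (hAR : ∀ u, u ≠ 0 → θ * primitive f u ≤ u * f u) (hw : w ≠ 0) :
    MonotoneOn (fun t => primitive f (t * w) * t ^ (-θ)) (Ioi 0) := by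
  have hderiv : ∀ t ∈ Ioi (0 : ℝ), HasDerivAt (fun t => primitive f (t * w) * t ^ (-θ))
      (f (t * w) * w * t ^ (-θ) + primitive f (t * w) * (-θ * t ^ (-θ - 1))) t :=
    fun t ht => ((primitive_hasDerivAt hf _).comp t (hasDerivAt_mul_const w)).mul
      (Real.hasDerivAt_rpow_const (Or.inl (ne_of_gt ht)))
  refine monotoneOn_of_deriv_nonneg (convex_Ioi 0)
    (fun t ht => (hderiv t ht).continuousAt.continuousWithinAt) ?_ ?_ <;> rw [interior_Ioi]
  · exact fun t ht => (hderiv t ht).differentiableAt.differentiableWithinAt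
  · intro t ht
    rw [(hderiv t ht).deriv]
    have hsplit : t ^ (-θ) = t ^ (-θ - 1) * t := by
      rw [← Real.rpow_add_one (ne_of_gt ht)]
      ring_nf
    have hAR_t := hAR (t * w) (mul_ne_zero (ne_of_gt ht) hw)
    rw [hsplit]
    nlinarith [Real.rpow_nonneg (le_of_lt ht) (-θ - 1)]

lemma primitive_mul_le_of_le_one (hf : Continuous f)
    (hAR : ∀ u, u ≠ 0 → θ * primitive f u ≤ u * f u) (hw : w ≠ 0) {t : ℝ} (ht₀ : 0 < t)
    (ht₁ : t ≤ 1) : primitive f (t * w) ≤ primitive f w * t ^ θ := by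
  have h := monotoneOn_primitive_mul_rpow_neg hf hAR hw ht₀ (mem_Ioi.2 one_pos) ht₁
  simp only [one_mul, Real.one_rpow, mul_one] at h
  rwa [Real.rpow_neg ht₀.le, ← div_eq_mul_inv, div_le_iff₀ (Real.rpow_pos_of_pos ht₀ θ)] at h

lemma le_primitive_mul_of_one_le (hf : Continuous f)
    (hAR : ∀ u, u ≠ 0 → θ * primitive f u ≤ u * f u) (hw : w ≠ 0) {t : ℝ} (ht : 1 ≤ t) :
    primitive f w * t ^ θ ≤ primitive f (t * w) := by
  have ht₀ : 0 < t := one_pos.trans_le ht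
  have h := monotoneOn_primitive_mul_rpow_neg hf hAR hw (mem_Ioi.2 one_pos) ht₀ ht
  simp only [one_mul, Real.one_rpow, mul_one] at h
  rwa [Real.rpow_neg ht₀.le, ← div_eq_mul_inv, le_div_iff₀ (Real.rpow_pos_of_pos ht₀ θ)] at h

end AmbrosettiRabinowitz

noncomputable def fiberingMap (f : ℝ → ℝ) (w t : ℝ) : ℝ := f (t * w) * w / t

section FiberingMap

variable {f : ℝ → ℝ} {θ w : ℝ}

lemma continuousOn_fiberingMap (hf : Continuous f) (w : ℝ) :
    ContinuousOn (fiberingMap f w) (Ioi 0) :=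
  ((hf.comp (continuous_id.mul continuous_const)).mul continuous_const).continuousOn.div
    continuousOn_id fun _ ht => ne_of_gt ht

lemma strictMonoOn_fiberingMap (hf : Differentiable ℝ f)
    (hc : ∀ u, u ≠ 0 → f u / u < deriv f u) (hw : w ≠ 0) :
    StrictMonoOn (fiberingMap f w) (Ioi 0) := by
  have hderiv : ∀ t ∈ Ioi (0 : ℝ), HasDerivAt (fiberingMap f w)
      ((deriv f (t * w) * w * w * t - f (t * w) * w * 1) / t ^ 2) t :=
    fun t ht => ((((hf _).hasDerivAt.comp t (hasDerivAt_mul_const w)).mul_const w).div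
      (hasDerivAt_id t) (ne_of_gt ht))
  refine strictMonoOn_of_deriv_pos (convex_Ioi 0) (continuousOn_fiberingMap hf.continuous w) ?_
  rw [interior_Ioi]
  intro t (ht : 0 < t)
  rw [(hderiv t ht).deriv]
  have htw : t * w ≠ 0 := mul_ne_zero (ne_of_gt ht) hw
  have hnum : deriv f (t * w) * w * w * t - f (t * w) * w * 1
      = (deriv f (t * w) - f (t * w) / (t * w)) * (w ^ 2 * t) := by
    field_simp
  rw [hnum]
  exact div_pos (mul_pos (sub_pos.2 (hc _ htw)) (by positivity)) (by positivity)

lemma exists_lt_fiberingMap (hf : Continuous f) (hθ : 2 < θ)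
    (hAR : ∀ u, u ≠ 0 → θ * primitive f u ≤ u * f u) (hw : w ≠ 0) (hFw : 0 < primitive f w)
    (A : ℝ) : ∃ t, 0 < t ∧ A < fiberingMap f w t := by
  have hlower : ∀ t, 1 ≤ t → θ * primitive f w * t ^ (θ - 2) ≤ fiberingMap f w t := by
    intro t ht
    have ht₀ : 0 < t := one_pos.trans_le ht
    have hgrowth := le_primitive_mul_of_one_le hf hAR hw ht
    have hAR_t := hAR (t * w) (mul_ne_zero (ne_of_gt ht₀) hw)
    have hθ₀ : 0 < θ := by linarith
    have key : θ * primitive f w * t ^ (θ - 2) * t * t ≤ f (t * w) * w * t :=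
      calc θ * primitive f w * t ^ (θ - 2) * t * t = θ * (primitive f w * t ^ θ) := by
            rw [rpow_eq_rpow_sub_two_mul_sq (ne_of_gt ht₀) θ]; ring
        _ ≤ θ * primitive f (t * w) := mul_le_mul_of_nonneg_left hgrowth hθ₀.le
        _ ≤ t * w * f (t * w) := hAR_t
        _ = f (t * w) * w * t := by ring
    rw [fiberingMap, le_div_iff₀ ht₀]
    exact le_of_mul_le_mul_right key ht₀
  have htend : Tendsto (fun t => θ * primitive f w * t ^ (θ - 2)) atTop atTop :=
    (tendsto_rpow_atTop (by linarith)).const_mul_atTop (by positivity)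
  obtain ⟨t, hA, ht⟩ := ((htend.eventually_gt_atTop A).and (eventually_ge_atTop 1)).exists
  exact ⟨t, one_pos.trans_le ht, hA.trans_le (hlower t ht)⟩

lemma exists_fiberingMap_lt (hf : Continuous f) (hθ : 2 < θ)
    (hAR : ∀ u, u ≠ 0 → θ * primitive f u ≤ u * f u) (hw : w ≠ 0) {A : ℝ} (hA : 0 < A) :
    ∃ t, 0 < t ∧ fiberingMap f w t < A := by
  by_contra! hge
  have hlower : ∀ t, 0 < t → A * t ^ 2 / 2 ≤ primitive f (t * w) := by
    intro t ht
    rw [primitive_mul_eq_integral]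
    calc A * t ^ 2 / 2 = ∫ s in (0 : ℝ)..t, A * s := by
          rw [intervalIntegral.integral_const_mul, integral_id]; ring
      _ ≤ ∫ s in (0 : ℝ)..t, f (s * w) * w := by
          refine intervalIntegral.integral_mono_on_of_le_Ioo ht.le
            ((by fun_prop : Continuous fun s : ℝ => A * s).intervalIntegrable _ _)
            ((by fun_prop : Continuous fun s => f (s * w) * w).intervalIntegrable _ _) ?_
          intro s hs
          have h := hge s hs.1
          rwa [fiberingMap, le_div_iff₀ hs.1] at h
  have hsmall : ∀ᶠ t in 𝓝 (0 : ℝ), primitive f w * t ^ (θ - 2) < A / 2 := by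
    have hcont := (Real.continuousAt_rpow_const 0 (θ - 2) (Or.inr (by linarith))).const_mul
      (primitive f w)
    refine hcont.eventually (gt_mem_nhds ?_)
    show primitive f w * (0 : ℝ) ^ (θ - 2) < A / 2
    rw [Real.zero_rpow (by linarith), mul_zero]
    positivity
  obtain ⟨t, ⟨hsmall_t, ht₁⟩, ht₀⟩ := (((hsmall.and (gt_mem_nhds one_pos)).filter_mono
    nhdsWithin_le_nhds).and (self_mem_nhdsWithin : Ioi (0 : ℝ) ∈ 𝓝[>] 0)).exists
  have hdecay := primitive_mul_le_of_le_one hf hAR hw ht₀ ht₁.le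
  rw [rpow_eq_rpow_sub_two_mul_sq (ne_of_gt ht₀) θ] at hdecay
  nlinarith [hlower t ht₀, pow_pos ht₀ 2]

end FiberingMap

theorem unique_nehari_projection (f : ℝ → ℝ) (hf : Differentiable ℝ f)
    (hc : ∀ u : ℝ, u ≠ 0 → f u / u < deriv f u)
    (θ : ℝ) (hθ : 2 < θ)
    (hAR : ∀ u : ℝ, u ≠ 0 → 0 < θ * primitive f u ∧ θ * primitive f u ≤ u * f u)
    (w A : ℝ) (hw : w ≠ 0) (hA : 0 < A) :
    ∃! t : ℝ, 0 < t ∧ f (t * w) * w = t * A := by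
  have hAR_le : ∀ u, u ≠ 0 → θ * primitive f u ≤ u * f u := fun u hu => (hAR u hu).2
  have hFw : 0 < primitive f w := pos_of_mul_pos_right (hAR w hw).1 (by linarith)
  obtain ⟨t₀, ht₀, hlo⟩ := exists_fiberingMap_lt hf.continuous hθ hAR_le hw hA
  obtain ⟨t₁, ht₁, hhi⟩ := exists_lt_fiberingMap hf.continuous hθ hAR_le hw hFw A
  have hunique := (strictMonoOn_fiberingMap hf hc hw).existsUnique_eq_of_lt_of_lt ordConnected_Ioi
    (continuousOn_fiberingMap hf.continuous w) ht₀ ht₁ hlo hhi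
  refine (existsUnique_congr fun t => and_congr_right fun (ht : 0 < t) => ?_).1 hunique
  rw [fiberingMap, div_eq_iff (ne_of_gt ht), mul_comm A]
end

section
/- Let (X, μ) be a measure space with 0 < μ(X) < ∞, let q > 2, R > 0, κ > 0, and let w : X → ℝ be measurable with ∫ |w|^q dμ ≤ R^q and ∫ w² dμ ≥ κ. Set ε := (κ/(4·μ(X)))^{1/2} and M := (4·R^q/κ)^{1/(q−2)}. Then ∫_{{x : ε ≤ |w(x)| ≤ M}} w² dμ ≥ κ/2. -/
/-!
Split `X` according to the size of `|w|`. On `{|w| < ε}` the integrand `w²` is below `ε²`, so that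
part carries at most `ε² μ(X) = κ/4`. On `{|w| > M}` we have `w² ≤ M^(2-q) |w|^q`, so that part
carries at most `M^(2-q) R^q = κ/4`. The annulus `{ε ≤ |w| ≤ M}` therefore keeps at least `κ/2`.
-/

open MeasureTheory Set Filter

section

variable {X : Type*} [MeasurableSpace X] {μ : Measure X}

lemma setIntegral_union_le {g : X → ℝ} {s t : Set X} (hg : 0 ≤ g) (hgi : IntegrableOn g (s ∪ t) μ) :
    ∫ x in s ∪ t, g x ∂μ ≤ ∫ x in s, g x ∂μ + ∫ x in t, g x ∂μ := by
  have hs : IntegrableOn g s μ := hgi.mono_set subset_union_left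
  have ht : IntegrableOn g t μ := hgi.mono_set subset_union_right
  rw [← integral_add_measure hs ht]
  exact integral_mono_measure (Measure.restrict_union_le s t) (.of_forall hg)
    (Integrable.add_measure hs ht)

lemma integral_le_setIntegral_annulus_add {f g : X → ℝ} (hf : Measurable f) (hg : 0 ≤ g)
    (hgi : Integrable g μ) (a b : ℝ) :
    ∫ x, g x ∂μ ≤ ∫ x in {x | a ≤ |f x| ∧ |f x| ≤ b}, g x ∂μ +
      (∫ x in {x | |f x| < a}, g x ∂μ + ∫ x in {x | b < |f x|}, g x ∂μ) := by
  have hS : MeasurableSet {x | a ≤ |f x| ∧ |f x| ≤ b} :=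
    (measurableSet_le measurable_const hf.abs).inter (measurableSet_le hf.abs measurable_const)
  have hcompl : {x | a ≤ |f x| ∧ |f x| ≤ b}ᶜ = {x | |f x| < a} ∪ {x | b < |f x|} := by
    ext x
    simp only [mem_compl_iff, mem_ofPred_eq, mem_union, not_and_or, not_le]
  rw [← integral_add_compl hS hgi, hcompl]
  gcongr
  exact setIntegral_union_le hg hgi.integrableOn

lemma setIntegral_sq_le_of_abs_lt [IsFiniteMeasure μ] (f : X → ℝ) (ε : ℝ) :
    ∫ x in {x | |f x| < ε}, f x ^ 2 ∂μ ≤ ε ^ 2 * μ.real univ := by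
  have hbound : ∀ x ∈ {x | |f x| < ε}, ‖f x ^ 2‖ ≤ ε ^ 2 := fun x hx => by
    rw [Real.norm_eq_abs, abs_pow]
    exact pow_le_pow_left₀ (abs_nonneg _) hx.le 2
  calc ∫ x in {x | |f x| < ε}, f x ^ 2 ∂μ
      ≤ ε ^ 2 * μ.real {x | |f x| < ε} :=
        (le_abs_self _).trans (norm_setIntegral_le_of_norm_le_const (measure_lt_top _ _) hbound)
    _ ≤ ε ^ 2 * μ.real univ :=
        mul_le_mul_of_nonneg_left (measureReal_mono (subset_univ _)) (sq_nonneg ε)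

lemma setIntegral_rpow_le_of_lt_abs {f : X → ℝ} {M p q : ℝ} (hf : Measurable f) (hM : 0 < M)
    (hpq : p ≤ q) (hi : Integrable (fun x => |f x| ^ q) μ) :
    ∫ x in {x | M < |f x|}, |f x| ^ p ∂μ ≤ M ^ (p - q) * ∫ x, |f x| ^ q ∂μ := by
  have hpoint : ∀ x ∈ {x | M < |f x|}, |f x| ^ p ≤ M ^ (p - q) * |f x| ^ q := fun x hx => by
    have hfx : 0 < |f x| := hM.trans hx
    calc |f x| ^ p = |f x| ^ (p - q) * |f x| ^ q := by rw [← Real.rpow_add hfx, sub_add_cancel]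
      _ ≤ M ^ (p - q) * |f x| ^ q :=
        mul_le_mul_of_nonneg_right (Real.rpow_le_rpow_of_nonpos hM hx.le (by linarith))
          (by positivity)
  rw [← integral_const_mul]
  calc ∫ x in {x | M < |f x|}, |f x| ^ p ∂μ
      ≤ ∫ x in {x | M < |f x|}, M ^ (p - q) * |f x| ^ q ∂μ :=
        integral_mono_of_nonneg (Eventually.of_forall fun x => by positivity)
          (hi.const_mul _).integrableOn
          (ae_restrict_of_forall_mem (measurableSet_lt measurable_const hf.abs) hpoint)
    _ ≤ ∫ x, M ^ (p - q) * |f x| ^ q ∂μ :=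
        setIntegral_le_integral (hi.const_mul _) (Eventually.of_forall fun x => by positivity)

end

theorem mass_on_annulus_general {X : Type*} [MeasurableSpace X] (μ : Measure X)
    (hμfin : μ Set.univ < ⊤)
    (q R κ : ℝ) (hq : 2 < q) (hR : 0 < R) (hκ : 0 < κ)
    (w : X → ℝ) (hw : Measurable w)
    (hintq : Integrable (fun x => |w x| ^ q) μ)
    (hint2 : Integrable (fun x => (w x) ^ 2) μ)
    (hq_bound : ∫ x, |w x| ^ q ∂μ ≤ R ^ q)
    (h2_bound : κ ≤ ∫ x, (w x) ^ 2 ∂μ) :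
    κ / 2 ≤ ∫ x in {x : X |
        (κ / (4 * (μ Set.univ).toReal)) ^ ((1:ℝ) / 2) ≤ |w x| ∧
        |w x| ≤ (4 * R ^ q / κ) ^ (1 / (q - 2))}, (w x) ^ 2 ∂μ := by
  have : IsFiniteMeasure μ := ⟨hμfin⟩
  set ε := (κ / (4 * (μ Set.univ).toReal)) ^ ((1:ℝ) / 2) with hε
  set M := (4 * R ^ q / κ) ^ (1 / (q - 2)) with hM
  have small : ∫ x in {x | |w x| < ε}, w x ^ 2 ∂μ ≤ κ / 4 :=
    calc _ ≤ ε ^ 2 * μ.real univ := setIntegral_sq_le_of_abs_lt w ε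
      _ = κ / (4 * μ.real univ) * μ.real univ := by
        rw [hε, ← Real.sqrt_eq_rpow, Real.sq_sqrt (by positivity)]; rfl
      -- not cancelled: if `μ univ = 0` then `ε = 0` and the bound still holds
      _ = κ / 4 * (μ.real univ / μ.real univ) := by ring
      _ ≤ κ / 4 := mul_le_of_le_one_right (by positivity) (div_self_le_one _)
  have large : ∫ x in {x | M < |w x|}, w x ^ 2 ∂μ ≤ κ / 4 := by
    have hM2q : M ^ (2 - q) = κ / (4 * R ^ q) := by
      rw [hM, ← Real.rpow_mul (by positivity), ← neg_sub q 2, mul_neg,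
        one_div_mul_cancel (by linarith : q - 2 ≠ 0),
        Real.rpow_neg_one, inv_div]
    calc _ = ∫ x in {x | M < |w x|}, |w x| ^ (2:ℝ) ∂μ := by simp only [Real.rpow_two, sq_abs]
      _ ≤ M ^ (2 - q) * ∫ x, |w x| ^ q ∂μ :=
        setIntegral_rpow_le_of_lt_abs hw (by positivity) hq.le hintq
      _ ≤ κ / (4 * R ^ q) * R ^ q := by rw [hM2q]; gcongr
      _ = κ / 4 := by field_simp
  linarith [integral_le_setIntegral_annulus_add hw (fun x => sq_nonneg (w x)) hint2 ε M]

theorem mass_on_annulus {X : Type*} [MeasurableSpace X] (μ : Measure X)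
    (hμ0 : 0 < μ Set.univ) (hμfin : μ Set.univ < ⊤)
    (q R κ : ℝ) (hq : 2 < q) (hR : 0 < R) (hκ : 0 < κ)
    (w : X → ℝ) (hw : Measurable w)
    (hintq : Integrable (fun x => |w x| ^ q) μ)
    (hint2 : Integrable (fun x => (w x) ^ 2) μ)
    (hq_bound : ∫ x, |w x| ^ q ∂μ ≤ R ^ q)
    (h2_bound : κ ≤ ∫ x, (w x) ^ 2 ∂μ) :
    κ / 2 ≤ ∫ x in {x : X |
        (κ / (4 * (μ Set.univ).toReal)) ^ ((1:ℝ) / 2) ≤ |w x| ∧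
        |w x| ≤ (4 * R ^ q / κ) ^ (1 / (q - 2))}, (w x) ^ 2 ∂μ :=
  mass_on_annulus_general μ hμfin q R κ hq hR hκ w hw hintq hint2 hq_bound h2_bound
end
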